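/- arXiv:0810.5012 — 4 statements merged into one kernel-verified Lean document; each statement's English description precedes it below -/
import Mathlib

section
/- Let n, m ≥ 1, let δ ∈ (0, 1), and let λ_1, …, λ_n be nonnegative real numbers with λ_i λ_j ≤ 1 − δ for all i ≠ j and λ_i = 0 whenever i > m. Let h^α_{ik} (α ∈ {1,…,m}, i, k ∈ {1,…,n}) be real numbers and set |A|² = Σ_{α=1}^m Σ_{i,k=1}^n (h^α_{ik})². Then |A|² + Σ_{i=1}^{min(n,m)} Σ_{k=1}^n λ_i² (h^i_{ik})² + 2 Σ_{k=1}^n Σ_{1 ≤ i < j ≤ min(n,m)} λ_i λ_j h^j_{ik} h^i_{jk} ≥ δ |A|². -/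
open Finset in
lemma key_offdiag (M : ℕ) (f : ℕ → ℕ → ℝ) (hf : ∀ a b, 0 ≤ f a b) :
    ∑ j ∈ range M, ∑ i ∈ range j, (f j i + f i j) ≤
      ∑ a ∈ range M, ∑ b ∈ range M, f a b := by
  induction M with
  | zero => simp
  | succ M ih =>
    rw [Finset.sum_range_succ]
    have hR : ∑ a ∈ range (M+1), ∑ b ∈ range (M+1), f a b
        = (∑ a ∈ range M, ∑ b ∈ range M, f a b)
          + (∑ a ∈ range M, f a M) + ((∑ b ∈ range M, f M b) + f M M) := by
      rw [Finset.sum_range_succ]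
      rw [show (∑ a ∈ range M, ∑ b ∈ range (M+1), f a b)
          = ∑ a ∈ range M, (∑ b ∈ range M, f a b + f a M) from
        Finset.sum_congr rfl fun a _ => Finset.sum_range_succ _ _]
      rw [Finset.sum_add_distrib, Finset.sum_range_succ]
    rw [hR]
    have h1 : ∑ i ∈ range M, (f M i + f i M)
        = (∑ b ∈ range M, f M b) + (∑ a ∈ range M, f a M) := by
      rw [Finset.sum_add_distrib]
    have := hf M M
    linarith [ih]

open Finset in
theorem stmt_1 (n m : ℕ) (hn : 1 ≤ n) (hm : 1 ≤ m) (δ : ℝ) (hδ0 : 0 < δ) (hδ1 : δ < 1)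
    (lam : ℕ → ℝ) (hnonneg : ∀ i, i < n → 0 ≤ lam i)
    (hpair : ∀ i j, i < n → j < n → i ≠ j → lam i * lam j ≤ 1 - δ)
    (hzero : ∀ i, m ≤ i → i < n → lam i = 0)
    (h : ℕ → ℕ → ℕ → ℝ)
    (A2 : ℝ)
    (hA2 : A2 = ∑ α ∈ range m, ∑ i ∈ range n, ∑ k ∈ range n, (h α i k) ^ 2) :
    δ * A2 ≤
      A2 + (∑ i ∈ range (min n m), ∑ k ∈ range n, (lam i) ^ 2 * (h i i k) ^ 2)
        + 2 * ∑ k ∈ range n, ∑ j ∈ range (min n m), ∑ i ∈ range j,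
            lam i * lam j * (h j i k) * (h i j k) := by
  set M := min n m with hM
  have hMn : M ≤ n := Nat.min_le_left _ _
  have hMm : M ≤ m := Nat.min_le_right _ _
  set S : ℝ := ∑ k ∈ range n, ∑ j ∈ range M, ∑ i ∈ range j,
      ((h j i k) ^ 2 + (h i j k) ^ 2) with hSdef
  -- A2 reordered
  have hA2' : A2 = ∑ k ∈ range n, ∑ α ∈ range m, ∑ i ∈ range n, (h α i k) ^ 2 := by
    rw [hA2]
    rw [show (∑ α ∈ range m, ∑ i ∈ range n, ∑ k ∈ range n, (h α i k) ^ 2)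
        = ∑ α ∈ range m, ∑ k ∈ range n, ∑ i ∈ range n, (h α i k) ^ 2 from
      Finset.sum_congr rfl fun α _ => Finset.sum_comm]
    exact Finset.sum_comm
  have hSle : S ≤ A2 := by
    rw [hSdef, hA2']
    refine Finset.sum_le_sum fun k _ => ?_
    calc ∑ j ∈ range M, ∑ i ∈ range j, ((h j i k) ^ 2 + (h i j k) ^ 2)
        ≤ ∑ a ∈ range M, ∑ b ∈ range M, (h a b k) ^ 2 :=
          key_offdiag M (fun a b => (h a b k) ^ 2) (fun a b => sq_nonneg _)
      _ ≤ ∑ a ∈ range M, ∑ b ∈ range n, (h a b k) ^ 2 := by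
          refine Finset.sum_le_sum fun a _ => ?_
          exact Finset.sum_le_sum_of_subset_of_nonneg
            (Finset.range_subset_range.2 hMn) (fun _ _ _ => sq_nonneg _)
      _ ≤ ∑ a ∈ range m, ∑ b ∈ range n, (h a b k) ^ 2 := by
          refine Finset.sum_le_sum_of_subset_of_nonneg
            (Finset.range_subset_range.2 hMm) (fun _ _ _ => ?_)
          exact Finset.sum_nonneg fun _ _ => sq_nonneg _
  have hSnonneg : 0 ≤ S := by
    refine Finset.sum_nonneg fun _ _ => Finset.sum_nonneg fun _ _ =>
      Finset.sum_nonneg fun _ _ => ?_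
    positivity
  have hcross : -((1 - δ) * S) ≤ 2 * ∑ k ∈ range n, ∑ j ∈ range M, ∑ i ∈ range j,
      lam i * lam j * (h j i k) * (h i j k) := by
    rw [hSdef, neg_mul_eq_mul_neg, ← Finset.sum_neg_distrib]
    rw [Finset.mul_sum, Finset.mul_sum]
    refine Finset.sum_le_sum fun k _ => ?_
    rw [← Finset.sum_neg_distrib, Finset.mul_sum, Finset.mul_sum]
    refine Finset.sum_le_sum fun j hj => ?_
    rw [← Finset.sum_neg_distrib, Finset.mul_sum, Finset.mul_sum]
    refine Finset.sum_le_sum fun i hi => ?_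
    have hjM : j < M := Finset.mem_range.1 hj
    have hij : i < j := Finset.mem_range.1 hi
    have hin : i < n := lt_of_lt_of_le (hij.trans hjM) hMn
    have hjn : j < n := lt_of_lt_of_le hjM hMn
    have h1 : lam i * lam j ≤ 1 - δ := hpair i j hin hjn (Nat.ne_of_lt hij)
    have h2 : 0 ≤ lam i * lam j := mul_nonneg (hnonneg i hin) (hnonneg j hjn)
    nlinarith [sq_nonneg (h j i k + h i j k), sq_nonneg (h j i k - h i j k)]
  have hdiag : 0 ≤ ∑ i ∈ range M, ∑ k ∈ range n, (lam i) ^ 2 * (h i i k) ^ 2 := by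
    refine Finset.sum_nonneg fun _ _ => Finset.sum_nonneg fun _ _ => ?_
    positivity
  have hfac : (1 - δ) * S ≤ (1 - δ) * A2 :=
    mul_le_mul_of_nonneg_left hSle (by linarith)
  linarith
end

section
/- Let n ≥ 2, let λ_1, …, λ_n be nonnegative real numbers with λ_i λ_k ≤ 1 for all i ≠ k, and let k₁, k₂ be real constants such that either (k₁ ≥ 0 and k₂ ≤ 0) or (k₁ ≥ k₂ > 0). Then Σ_{i ≠ k} [k₁ λ_i² − k₂ λ_i² λ_k²] / ((1 + λ_i²)(1 + λ_k²)) ≥ 0, the sum being over all ordered pairs (i, k) with i ≠ k. -/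
open Finset in
theorem stmt_2 (n : ℕ) (hn : 2 ≤ n) (lam : ℕ → ℝ)
    (hnonneg : ∀ i, i < n → 0 ≤ lam i)
    (hpair : ∀ i k, i < n → k < n → i ≠ k → lam i * lam k ≤ 1)
    (k₁ k₂ : ℝ) (hk : (0 ≤ k₁ ∧ k₂ ≤ 0) ∨ (k₂ ≤ k₁ ∧ 0 < k₂)) :
    0 ≤ ∑ i ∈ range n, ∑ k ∈ (range n).erase i,
        (k₁ * (lam i) ^ 2 - k₂ * (lam i) ^ 2 * (lam k) ^ 2) /
          ((1 + (lam i) ^ 2) * (1 + (lam k) ^ 2)) := by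
  set f : ℕ → ℕ → ℝ := fun i k =>
    (k₁ * (lam i) ^ 2 - k₂ * (lam i) ^ 2 * (lam k) ^ 2) /
      ((1 + (lam i) ^ 2) * (1 + (lam k) ^ 2)) with hf
  have key : ∀ i k, i < n → k < n → i ≠ k → 0 ≤ f i k + f k i := by
    intro i k hi hk' hik
    have hx := hnonneg i hi
    have hy := hnonneg k hk'
    have hp := hpair i k hi hk' hik
    have hD : 0 < (1 + (lam i) ^ 2) * (1 + (lam k) ^ 2) := by positivity
    have hnum : 0 ≤ (k₁ * (lam i) ^ 2 - k₂ * (lam i) ^ 2 * (lam k) ^ 2)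
        + (k₁ * (lam k) ^ 2 - k₂ * (lam k) ^ 2 * (lam i) ^ 2) := by
      rcases hk with ⟨h1, h2⟩ | ⟨h1, h2⟩
      · nlinarith [sq_nonneg (lam i), sq_nonneg (lam k), sq_nonneg (lam i * lam k),
          mul_nonneg (sq_nonneg (lam i)) (sq_nonneg (lam k))]
      · nlinarith [sq_nonneg (lam i - lam k), mul_nonneg hx hy,
          mul_nonneg (mul_nonneg hx hy) (sub_nonneg.mpr hp)]
    have : f i k + f k i = ((k₁ * (lam i) ^ 2 - k₂ * (lam i) ^ 2 * (lam k) ^ 2)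
        + (k₁ * (lam k) ^ 2 - k₂ * (lam k) ^ 2 * (lam i) ^ 2))
        / ((1 + (lam i) ^ 2) * (1 + (lam k) ^ 2)) := by
      rw [hf]
      field_simp
    rw [this]
    exact div_nonneg hnum hD.le
  have h2 : 0 ≤ ∑ i ∈ range n, ∑ k ∈ (range n).erase i, (f i k + f k i) := by
    refine Finset.sum_nonneg fun i hi => Finset.sum_nonneg fun k hk' => ?_
    have hi' := Finset.mem_range.mp hi
    have hk'' := Finset.mem_range.mp (Finset.mem_of_mem_erase hk')
    exact key i k hi' hk'' (Finset.ne_of_mem_erase hk').symm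
  have hsplit : ∑ i ∈ range n, ∑ k ∈ (range n).erase i, (f i k + f k i)
      = (∑ i ∈ range n, ∑ k ∈ (range n).erase i, f i k)
        + ∑ i ∈ range n, ∑ k ∈ (range n).erase i, f k i := by
    simp [Finset.sum_add_distrib]
  have hswap : (∑ i ∈ range n, ∑ k ∈ (range n).erase i, f k i)
      = ∑ i ∈ range n, ∑ k ∈ (range n).erase i, f i k := by
    rw [Finset.sum_comm' (s' := fun k => (range n).erase k) (t' := range n)]
    intro i k
    constructor
    · rintro ⟨h1, h2⟩
      exact ⟨Finset.mem_erase.mpr ⟨(Finset.ne_of_mem_erase h2).symm, h1⟩,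
        Finset.mem_of_mem_erase h2⟩
    · rintro ⟨h1, h2⟩
      exact ⟨Finset.mem_of_mem_erase h1,
        Finset.mem_erase.mpr ⟨(Finset.ne_of_mem_erase h1).symm, h2⟩⟩
  linarith [h2, hsplit, hswap]
end

section
/- Let n ≥ 2, let λ_1, …, λ_n be nonnegative real numbers with ∏_{j=1}^n (1 + λ_j²) ≤ 4, and let k₁ > 0 and k₂ ≤ 0 be real constants. Then Σ_{i ≠ k} [k₁ λ_i² − k₂ λ_i² λ_k²] / ((1 + λ_i²)(1 + λ_k²)) ≥ (k₁ (n − 1)/4) Σ_{i=1}^n λ_i² ≥ (k₁ (n − 1)/4) Σ_{i=1}^n ln(1 + λ_i²), the first sum being over all ordered pairs (i, k) with i ≠ k. -/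
open Finset in
theorem stmt_4 (n : ℕ) (hn : 2 ≤ n) (lam : ℕ → ℝ)
    (hnonneg : ∀ i, i < n → 0 ≤ lam i)
    (hprod : ∏ j ∈ range n, (1 + (lam j) ^ 2) ≤ 4)
    (k₁ k₂ : ℝ) (hk₁ : 0 < k₁) (hk₂ : k₂ ≤ 0) :
    (k₁ * (n - 1) / 4) * ∑ i ∈ range n, (lam i) ^ 2 ≤
      ∑ i ∈ range n, ∑ k ∈ (range n).erase i,
        (k₁ * (lam i) ^ 2 - k₂ * (lam i) ^ 2 * (lam k) ^ 2) /
          ((1 + (lam i) ^ 2) * (1 + (lam k) ^ 2)) ∧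
    (k₁ * (n - 1) / 4) * ∑ i ∈ range n, Real.log (1 + (lam i) ^ 2) ≤
      (k₁ * (n - 1) / 4) * ∑ i ∈ range n, (lam i) ^ 2 := by
  have hc : 0 ≤ k₁ * (n - 1) / 4 := by
    have : (1 : ℝ) ≤ (n : ℝ) := by exact_mod_cast Nat.one_le_of_lt hn
    have : (0:ℝ) ≤ (n:ℝ) - 1 := by linarith
    positivity
  constructor
  · -- term bound
    have key : ∀ i ∈ range n, (k₁ / 4) * (n - 1) * (lam i) ^ 2 ≤
        ∑ k ∈ (range n).erase i,
          (k₁ * (lam i) ^ 2 - k₂ * (lam i) ^ 2 * (lam k) ^ 2) /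
            ((1 + (lam i) ^ 2) * (1 + (lam k) ^ 2)) := by
      intro i hi
      have hbound : ∀ k ∈ (range n).erase i,
          k₁ * (lam i) ^ 2 / 4 ≤
          (k₁ * (lam i) ^ 2 - k₂ * (lam i) ^ 2 * (lam k) ^ 2) /
            ((1 + (lam i) ^ 2) * (1 + (lam k) ^ 2)) := by
        intro k hk
        have hki := Finset.mem_of_mem_erase hk
        have hik : i ≠ k := (Finset.ne_of_mem_erase hk).symm
        have hpair : (1 + (lam i) ^ 2) * (1 + (lam k) ^ 2) ≤ 4 := by
          have hsub : ({i, k} : Finset ℕ) ⊆ range n := by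
            intro x hx
            simp only [Finset.mem_insert, Finset.mem_singleton] at hx
            rcases hx with rfl | rfl
            · exact hi
            · exact hki
          have hsd := Finset.prod_sdiff (f := fun j => 1 + (lam j) ^ 2) hsub
          have h1 : (1:ℝ) ≤ ∏ j ∈ range n \ {i, k}, (1 + (lam j) ^ 2) := by
            calc (1:ℝ) = ∏ _j ∈ range n \ {i, k}, (1:ℝ) := (Finset.prod_const_one).symm
              _ ≤ _ := Finset.prod_le_prod (fun _ _ => zero_le_one)
                  (fun j _ => by nlinarith [sq_nonneg (lam j)])
          have h2 : (0:ℝ) ≤ ∏ j ∈ ({i, k} : Finset ℕ), (1 + (lam j) ^ 2) :=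
            Finset.prod_nonneg fun j _ => by positivity
          have h3 := Finset.prod_pair (f := fun j => 1 + (lam j) ^ 2) hik
          rw [h3] at hsd h2
          nlinarith [hsd, h1, h2, hprod]
        have hposi : (0:ℝ) < (1 + (lam i) ^ 2) * (1 + (lam k) ^ 2) := by positivity
        apply div_le_div₀ (by nlinarith [sq_nonneg (lam i), sq_nonneg (lam k), sq_nonneg (lam i * lam k)])
          (by nlinarith [sq_nonneg (lam i * lam k)]) hposi hpair
      calc (k₁ / 4) * (n - 1) * (lam i) ^ 2
          = ∑ _k ∈ (range n).erase i, k₁ * (lam i) ^ 2 / 4 := by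
            rw [Finset.sum_const, Finset.card_erase_of_mem hi, Finset.card_range,
              nsmul_eq_mul]
            have : ((n - 1 : ℕ) : ℝ) = (n : ℝ) - 1 := by
              have := Nat.one_le_of_lt hn
              push_cast [Nat.cast_sub this]
              ring
            rw [this]; ring
        _ ≤ _ := Finset.sum_le_sum hbound
    calc (k₁ * (n - 1) / 4) * ∑ i ∈ range n, (lam i) ^ 2
        = ∑ i ∈ range n, (k₁ / 4) * (n - 1) * (lam i) ^ 2 := by
          rw [Finset.mul_sum]; apply Finset.sum_congr rfl; intro i _; ring
      _ ≤ _ := Finset.sum_le_sum key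
  · apply mul_le_mul_of_nonneg_left _ hc
    apply Finset.sum_le_sum
    intro i _
    have := Real.add_one_le_exp ((lam i)^2)
    have h := Real.log_le_log (by positivity) (show 1 + (lam i)^2 ≤ Real.exp ((lam i)^2) by linarith)
    simpa [Real.log_exp] using h
end

section
/- Let n ≥ 2, let ε > 0, let λ_1, …, λ_n be nonnegative real numbers with ∏_{j=1}^n (1 + λ_j²) ≤ 4 and λ_i λ_k ≤ 1 − ε/4 for all i ≠ k, and let k₁ ≥ k₂ > 0 be real constants. Then Σ_{i ≠ k} [k₁ λ_i² − k₂ λ_i² λ_k²] / ((1 + λ_i²)(1 + λ_k²)) ≥ (ε k₁ (n − 1)/16) Σ_{i=1}^n λ_i² ≥ (ε k₁ (n − 1)/16) Σ_{i=1}^n ln(1 + λ_i²), the first sum being over all ordered pairs (i, k) with i ≠ k. -/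
open Finset in
theorem stmt_5 (n : ℕ) (hn : 2 ≤ n) (ε : ℝ) (hε : 0 < ε) (lam : ℕ → ℝ)
    (hnonneg : ∀ i, i < n → 0 ≤ lam i)
    (hprod : ∏ j ∈ range n, (1 + (lam j) ^ 2) ≤ 4)
    (hpair : ∀ i k, i < n → k < n → i ≠ k → lam i * lam k ≤ 1 - ε / 4)
    (k₁ k₂ : ℝ) (hk : k₂ ≤ k₁) (hk₂ : 0 < k₂) :
    (ε * k₁ * (n - 1) / 16) * ∑ i ∈ range n, (lam i) ^ 2 ≤
      ∑ i ∈ range n, ∑ k ∈ (range n).erase i,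
        (k₁ * (lam i) ^ 2 - k₂ * (lam i) ^ 2 * (lam k) ^ 2) /
          ((1 + (lam i) ^ 2) * (1 + (lam k) ^ 2)) ∧
    (ε * k₁ * (n - 1) / 16) * ∑ i ∈ range n, Real.log (1 + (lam i) ^ 2) ≤
      (ε * k₁ * (n - 1) / 16) * ∑ i ∈ range n, (lam i) ^ 2 := by
  have hk₁ : 0 < k₁ := hk₂.trans_le hk
  have hn1 : (2:ℝ) ≤ (n:ℝ) := by exact_mod_cast hn
  have hc : 0 ≤ ε * k₁ * ((n:ℝ) - 1) / 16 := by
    apply div_nonneg _ (by norm_num)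
    apply mul_nonneg (by positivity)
    linarith
  constructor
  · set f : ℕ → ℕ → ℝ := fun i k =>
      (k₁ * (lam i) ^ 2 - k₂ * (lam i) ^ 2 * (lam k) ^ 2) /
        ((1 + (lam i) ^ 2) * (1 + (lam k) ^ 2)) with hf
    set T : ℝ := ∑ i ∈ range n, (lam i) ^ 2 with hT
    have hεle : ε ≤ 4 := by
      have h01 := hpair 0 1 (by omega) (by omega) (by norm_num)
      have h0 := mul_nonneg (hnonneg 0 (by omega)) (hnonneg 1 (by omega))
      linarith
    -- denominators are at most 4
    have hD4 : ∀ i k, i < n → k < n → i ≠ k →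
        (1 + (lam i)^2) * (1 + (lam k)^2) ≤ 4 := by
      intro i k hi hkn hik
      have hsub : ({i, k} : Finset ℕ) ⊆ range n := by
        intro x hx
        simp only [mem_insert, mem_singleton] at hx
        rcases hx with rfl | rfl <;> simp [mem_range, hi, hkn]
      calc (1 + (lam i)^2) * (1 + (lam k)^2)
          = ∏ j ∈ ({i, k} : Finset ℕ), (1 + (lam j)^2) :=
            (Finset.prod_pair (f := fun j => 1 + lam j ^ 2) hik).symm
        _ ≤ ∏ j ∈ range n, (1 + (lam j)^2) := by
            rw [← Finset.prod_sdiff hsub]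
            have hone : (1:ℝ) ≤ ∏ j ∈ range n \ {i, k}, (1 + lam j ^ 2) := by
              calc (1:ℝ) = ∏ j ∈ range n \ {i, k}, (1:ℝ) := by simp
                _ ≤ _ := Finset.prod_le_prod (fun j _ => zero_le_one)
                    (fun j _ => by nlinarith [sq_nonneg (lam j)])
            have hpos : (0:ℝ) ≤ ∏ j ∈ ({i, k} : Finset ℕ), (1 + lam j ^ 2) := by
              rw [Finset.prod_pair hik]; positivity
            exact le_mul_of_one_le_left hpos hone
        _ ≤ 4 := hprod
    -- key pairwise bound
    have key : ∀ i k, i < n → k < n → i ≠ k →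
        (ε * k₁ / 16) * ((lam i)^2 + (lam k)^2) ≤ f i k + f k i := by
      intro i k hi hkn hik
      have ha := hnonneg i hi
      have hb := hnonneg k hkn
      have hab := hpair i k hi hkn hik
      have habn : 0 ≤ lam i * lam k := mul_nonneg ha hb
      set a := lam i
      set b := lam k
      have hDpos : 0 < (1 + a^2) * (1 + b^2) := by positivity
      have hD : (1 + a^2) * (1 + b^2) ≤ 4 := hD4 i k hi hkn hik
      have hfs : f i k + f k i =
          (k₁ * (a^2 + b^2) - 2 * k₂ * a^2 * b^2) / ((1 + a^2) * (1 + b^2)) := by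
        simp only [hf]
        rw [mul_comm (1 + b^2) (1 + a^2), ← add_div]
        simp only [a, b]
        ring_nf
      rw [hfs]
      have hN : (ε * k₁ / 4) * (a^2 + b^2) ≤ k₁ * (a^2 + b^2) - 2 * k₂ * a^2 * b^2 := by
        nlinarith [mul_nonneg habn (sub_nonneg.2 hab),
          mul_nonneg (sub_nonneg.2 hab) (sq_nonneg (a - b)),
          mul_nonneg (sub_nonneg.2 hk) (mul_nonneg (sq_nonneg a) (sq_nonneg b)),
          sq_nonneg (a - b), mul_pos hε hk₁,
          mul_nonneg (mul_nonneg hε.le hk₁.le) (sq_nonneg (a - b))]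
      have hN0 : 0 ≤ k₁ * (a^2 + b^2) - 2 * k₂ * a^2 * b^2 := by
        have : 0 ≤ (ε * k₁ / 4) * (a^2 + b^2) := by positivity
        linarith
      calc (ε * k₁ / 16) * (a^2 + b^2)
          = ((ε * k₁ / 4) * (a^2 + b^2)) / 4 := by ring
        _ ≤ (k₁ * (a^2 + b^2) - 2 * k₂ * a^2 * b^2) / 4 := by
            apply div_le_div_of_nonneg_right hN (by norm_num)
        _ ≤ (k₁ * (a^2 + b^2) - 2 * k₂ * a^2 * b^2) / ((1 + a^2) * (1 + b^2)) := by
            apply div_le_div_of_nonneg_left hN0 hDpos hD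
    -- swap the order
    have hswap : (∑ i ∈ range n, ∑ k ∈ (range n).erase i, f i k)
        = ∑ i ∈ range n, ∑ k ∈ (range n).erase i, f k i := by
      apply Finset.sum_comm'
      intro x y
      simp only [mem_erase, mem_range]
      constructor
      · rintro ⟨hx, hyx, hy⟩; exact ⟨⟨fun h => hyx h.symm, hx⟩, hy⟩
      · rintro ⟨⟨hxy, hx⟩, hy⟩; exact ⟨hx, fun h => hxy h.symm, hy⟩
    set S : ℝ := ∑ i ∈ range n, ∑ k ∈ (range n).erase i, f i k with hS
    -- inner sum computation
    have hinner : ∑ i ∈ range n, ∑ k ∈ (range n).erase i, ((lam i)^2 + (lam k)^2)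
        = 2 * ((n:ℝ) - 1) * T := by
      have : ∀ i ∈ range n, ∑ k ∈ (range n).erase i, ((lam i)^2 + (lam k)^2)
          = ((n:ℝ) - 1) * (lam i)^2 + (T - (lam i)^2) := by
        intro i hi
        rw [Finset.sum_add_distrib, Finset.sum_const,
          Finset.card_erase_of_mem hi, Finset.card_range,
          Finset.sum_erase_eq_sub hi, nsmul_eq_mul]
        have : ((n - 1 : ℕ) : ℝ) = (n:ℝ) - 1 := by
          rw [Nat.cast_sub (by omega)]; norm_num
        rw [this, hT]
      rw [Finset.sum_congr rfl this, Finset.sum_add_distrib, Finset.sum_sub_distrib,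
        ← Finset.mul_sum, Finset.sum_const, Finset.card_range, nsmul_eq_mul, ← hT]
      ring
    have h2S : 2 * (ε * k₁ * ((n:ℝ) - 1) / 16) * T ≤ S + S := by
      have hSS : S + S = ∑ i ∈ range n, ∑ k ∈ (range n).erase i, (f i k + f k i) := by
        nth_rewrite 2 [hswap]
        rw [hS, ← Finset.sum_add_distrib]
        exact Finset.sum_congr rfl fun i _ => Finset.sum_add_distrib.symm
      rw [hSS]
      calc 2 * (ε * k₁ * ((n:ℝ) - 1) / 16) * T
          = (ε * k₁ / 16) * (2 * ((n:ℝ) - 1) * T) := by ring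
        _ = (ε * k₁ / 16) * ∑ i ∈ range n, ∑ k ∈ (range n).erase i,
              ((lam i)^2 + (lam k)^2) := by rw [hinner]
        _ = ∑ i ∈ range n, ∑ k ∈ (range n).erase i,
              (ε * k₁ / 16) * ((lam i)^2 + (lam k)^2) := by
            rw [Finset.mul_sum]
            exact Finset.sum_congr rfl fun i _ => Finset.mul_sum _ _ _
        _ ≤ ∑ i ∈ range n, ∑ k ∈ (range n).erase i, (f i k + f k i) := by
            apply Finset.sum_le_sum
            intro i hi
            apply Finset.sum_le_sum
            intro k hkk
            have hkm := Finset.mem_erase.1 hkk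
            exact key i k (Finset.mem_range.1 hi) (Finset.mem_range.1 hkm.2)
              (fun h => hkm.1 h.symm)
    linarith
  · apply mul_le_mul_of_nonneg_left _ hc
    apply Finset.sum_le_sum
    intro i _
    have h1 : (0:ℝ) < 1 + (lam i)^2 := by positivity
    have := Real.log_le_sub_one_of_pos h1
    linarith
end
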